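/- Fix Q < 0, A ∈ ℝ, reals Z_{m-1}, Z_m, and define Z̃ = A + 2mQ - max(Z_{m-1} + Z_m, 0) - max(mQ - Z_m, 0) and Z' = -Z_m + max(Z̃, 0). For ζ_{m-1} = ζ_m = +1, suppose mQ - Z_m > 0 and Z̃ > 0. Then the single parity ultradiscrete Painlevé II equation at index m, namely the equality of the two maxima in Eq.(udPIIsingle), is satisfied by (ζ_{m+1}, Z_{m+1}) = (+1, Z') and by no other choice of (ζ_{m+1}, Z_{m+1}) ∈ {+1,-1} × ℝ. -/
import Mathlib


/-- Sign-encoding function `S : {+1,-1} → {0,-∞}` (values in the extended reals). -/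
noncomputable def S (ω : ℝ) : EReal := if ω = 1 then 0 else ⊥

/-- Left-hand side of the single parity ultradiscrete Painlevé II equation at index `m`,
with `mq = m*Q`, amplitudes `Zm1 = Z_{m-1}`, `Zm = Z_m`, `Zp = Z_{m+1}` and
parities `ζ1 = ζ_{m-1}`, `ζ0 = ζ_m`, `ζp = ζ_{m+1}`. -/
noncomputable def pudLHS (A mq Zm1 Zm Zp ζ1 ζ0 ζp : ℝ) : EReal :=
  max (((Zp + 3 * Zm + Zm1 : ℝ) : EReal) + S (ζp * ζ0 * ζ1)) <|
  max (((Zp + 2 * Zm : ℝ) : EReal) + S ζp) <|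
  max (((2 * Zm + Zm1 : ℝ) : EReal) + S ζ1) <|
  max (((Zm : ℝ) : EReal) + S ζ0) <|
  max (((Zm + A + 2 * mq : ℝ) : EReal) + S ζ0) <|
  max (((Zp + 2 * Zm + Zm1 + mq : ℝ) : EReal) + S (-(ζp * ζ1))) <|
  max (((Zp + Zm + mq : ℝ) : EReal) + S (-(ζp * ζ0)))
      (((Zm + Zm1 + mq : ℝ) : EReal) + S (-(ζ0 * ζ1)))

/-- Right-hand side of the single parity ultradiscrete Painlevé II equation
(same terms with all parity arguments negated, plus the extra term `mq`). -/
noncomputable def pudRHS (A mq Zm1 Zm Zp ζ1 ζ0 ζp : ℝ) : EReal :=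
  max (((Zp + 3 * Zm + Zm1 : ℝ) : EReal) + S (-(ζp * ζ0 * ζ1))) <|
  max (((Zp + 2 * Zm : ℝ) : EReal) + S (-ζp)) <|
  max (((2 * Zm + Zm1 : ℝ) : EReal) + S (-ζ1)) <|
  max (((Zm : ℝ) : EReal) + S (-ζ0)) <|
  max (((Zm + A + 2 * mq : ℝ) : EReal) + S (-ζ0)) <|
  max (((Zp + 2 * Zm + Zm1 + mq : ℝ) : EReal) + S (ζp * ζ1)) <|
  max (((Zp + Zm + mq : ℝ) : EReal) + S (ζp * ζ0)) <|
  max (((Zm + Zm1 + mq : ℝ) : EReal) + S (ζ0 * ζ1)) ((mq : ℝ) : EReal)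

private lemma coe_max' (a b : ℝ) : ((max a b : ℝ) : EReal) = max (a : EReal) (b : EReal) :=
  Monotone.map_max (fun _ _ h => EReal.coe_le_coe_iff.mpr h)

set_option maxHeartbeats 1600000 in
theorem stmt14 (Q A : ℝ) (hQ : Q < 0) (m : ℤ) (Zm1 Zm : ℝ)
    (hpos : 0 < (m : ℝ) * Q - Zm)
    (hZt : 0 < A + 2 * (m : ℝ) * Q - max (Zm1 + Zm) 0 - max ((m : ℝ) * Q - Zm) 0) :
    ∀ ζp Zp : ℝ, (ζp = 1 ∨ ζp = -1) →
      (pudLHS A ((m : ℝ) * Q) Zm1 Zm Zp 1 1 ζp = pudRHS A ((m : ℝ) * Q) Zm1 Zm Zp 1 1 ζp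
        ↔ (ζp = 1 ∧
            Zp = -Zm + max (A + 2 * (m : ℝ) * Q - max (Zm1 + Zm) 0
                              - max ((m : ℝ) * Q - Zm) 0) 0)) := by
  intro ζp Zp hζ
  have S1 : S 1 = 0 := if_pos rfl
  have Sm1 : S (-1) = ⊥ := if_neg (by norm_num)
  rw [max_eq_left hpos.le] at hZt ⊢
  rw [max_eq_left hZt.le]
  rcases le_total (Zm1 + Zm) 0 with hc | hc
  · rw [max_eq_right hc] at hZt ⊢
    rcases hζ with h1 | h1 <;> subst h1
    · simp only [pudLHS, pudRHS, mul_one, one_mul, neg_neg, S1, Sm1, add_zero,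
        EReal.add_bot, max_bot_left, max_bot_right, ← coe_max', EReal.coe_eq_coe_iff]
      constructor
      · intro h
        refine ⟨trivial, ?_⟩
        simp only [max_def] at h
        split_ifs at h <;> linarith
      · rintro ⟨-, h⟩
        rw [h]
        simp only [max_def]
        split_ifs <;> linarith
    · simp only [pudLHS, pudRHS, mul_one, one_mul, neg_neg, S1, Sm1, add_zero,
        EReal.add_bot, max_bot_left, max_bot_right, ← coe_max', EReal.coe_eq_coe_iff]
      constructor
      · intro h
        exfalso
        simp only [max_def] at h
        split_ifs at h <;> linarith
      · rintro ⟨h, -⟩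
        norm_num at h
  · rw [max_eq_left hc] at hZt ⊢
    rcases hζ with h1 | h1 <;> subst h1
    · simp only [pudLHS, pudRHS, mul_one, one_mul, neg_neg, S1, Sm1, add_zero,
        EReal.add_bot, max_bot_left, max_bot_right, ← coe_max', EReal.coe_eq_coe_iff]
      constructor
      · intro h
        refine ⟨trivial, ?_⟩
        simp only [max_def] at h
        split_ifs at h <;> linarith
      · rintro ⟨-, h⟩
        rw [h]
        simp only [max_def]
        split_ifs <;> linarith
    · simp only [pudLHS, pudRHS, mul_one, one_mul, neg_neg, S1, Sm1, add_zero,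
        EReal.add_bot, max_bot_left, max_bot_right, ← coe_max', EReal.coe_eq_coe_iff]
      constructor
      · intro h
        exfalso
        simp only [max_def] at h
        split_ifs at h <;> linarith
      · rintro ⟨h, -⟩
        norm_num at h
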